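/- arXiv:1105.0288 — 3 statements merged into one kernel-verified Lean document; each statement's English description precedes it below -/
import Mathlib

section
/- Let U be a set of predicate symbols and M, N be sets of interpretations such that M is semi-saturated relative to U. Then: (1) M = N if and only if M ⊆ N and N|U ⊆ M|U and N|Uᶜ ⊆ M|Uᶜ; (2) M is a proper subset of N if and only if M ⊆ N and either M|U is a proper subset of N|U or M|Uᶜ is a proper subset of N|Uᶜ. -/
open Set

variable {A P : Type*}

/-- Restriction of an interpretation (set of atoms) to the predicate symbols in `U`. -/
def restr (pred : A → P) (U : Set P) (I : Set A) : Set A :=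
  {p | p ∈ I ∧ pred p ∈ U}

/-- Restriction of a set of interpretations to the predicate symbols in `U`. -/
def restrM (pred : A → P) (U : Set P) (M : Set (Set A)) : Set (Set A) :=
  restr pred U '' M

/-- `M` is saturated relative to `U`. -/
def saturated (pred : A → P) (U : Set P) (M : Set (Set A)) : Prop :=
  ∀ I : Set A, restr pred U I ∈ restrM pred U M → I ∈ M

/-- `σ_U(M)`: the set of all interpretations `I` with `I|U ∈ M|U`. -/
def sigmaSet (pred : A → P) (U : Set P) (M : Set (Set A)) : Set (Set A) :=
  {I | restr pred U I ∈ restrM pred U M}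

/-- `M` is semi-saturated relative to `U`. -/
def semiSaturated (pred : A → P) (U : Set P) (M : Set (Set A)) : Prop :=
  ∀ I : Set A, restr pred U I ∈ restrM pred U M →
    restr pred Uᶜ I ∈ restrM pred Uᶜ M → I ∈ M

/-- `M` is sequence-saturated relative to the family `S`. -/
def seqSaturated {ι : Type*} (pred : A → P) (S : ι → Set P) (M : Set (Set A)) : Prop :=
  ∀ I : Set A, (∀ α, restr pred (S α) I ∈ restrM pred (S α) M) → I ∈ M

/-- The difference in the interpretation of predicate symbol `Q` between `I` and `J`. -/
def diffP (pred : A → P) (Q : P) (I J : Set A) : Set A :=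
  {p | p ∈ symmDiff I J ∧ pred p = Q}

/-- `J ≤_I J'` : `J` is at least as close to `I` as `J'`. -/
def closerLE (pred : A → P) (I J J' : Set A) : Prop :=
  ∀ Q : P, diffP pred Q I J ⊆ diffP pred Q I J'

/-- `J <_I J'` : `J` is closer to `I` than `J'`. -/
def closerLT (pred : A → P) (I J J' : Set A) : Prop :=
  closerLE pred I J J' ∧ ¬ closerLE pred I J' J

/-- `I ⊕ N` for an interpretation `I` and a set of interpretations `N`. -/
def oplusI (pred : A → P) (I : Set A) (N : Set (Set A)) : Set (Set A) :=
  {J | J ∈ N ∧ ¬ ∃ J' ∈ N, closerLT pred I J' J}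

/-- `M ⊕ N` for sets of interpretations `M`, `N`. -/
def oplus (pred : A → P) (M N : Set (Set A)) : Set (Set A) :=
  ⋃ I ∈ M, oplusI pred I N

lemma restrM_mono (pred : A → P) (U : Set P) {M N : Set (Set A)} (h : M ⊆ N) :
    restrM pred U M ⊆ restrM pred U N :=
  image_mono h

lemma semiSaturated.eq_iff {pred : A → P} {U : Set P} {M N : Set (Set A)}
    (hM : semiSaturated pred U M) :
    M = N ↔ M ⊆ N ∧ restrM pred U N ⊆ restrM pred U M ∧
      restrM pred Uᶜ N ⊆ restrM pred Uᶜ M := by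
  refine ⟨?_, fun ⟨hMN, hU, hUc⟩ => hMN.antisymm fun I hI => ?_⟩
  · rintro rfl
    exact ⟨subset_rfl, subset_rfl, subset_rfl⟩
  · exact hM I (hU (mem_image_of_mem _ hI)) (hUc (mem_image_of_mem _ hI))

lemma semiSaturated.ssubset_iff {pred : A → P} {U : Set P} {M N : Set (Set A)}
    (hM : semiSaturated pred U M) :
    M ⊂ N ↔ M ⊆ N ∧ (restrM pred U M ⊂ restrM pred U N ∨
      restrM pred Uᶜ M ⊂ restrM pred Uᶜ N) := by
  refine ⟨fun h => ⟨h.subset, ?_⟩, fun ⟨hMN, h⟩ => hMN.ssubset_of_ne fun hEq => ?_⟩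
  · have hne : M ≠ N := h.ne
    rw [Ne, hM.eq_iff, not_and, not_and_or] at hne
    rcases hne h.subset with hU | hUc
    · exact Or.inl ((restrM_mono pred U h.subset).ssubset_of_not_subset hU)
    · exact Or.inr ((restrM_mono pred Uᶜ h.subset).ssubset_of_not_subset hUc)
  · subst hEq
    rcases h with h | h <;> exact h.ne rfl

theorem stmt_10 (pred : A → P) (U : Set P) (M N : Set (Set A))
    (hM : semiSaturated pred U M) :
    (M = N ↔ M ⊆ N ∧ restrM pred U N ⊆ restrM pred U M ∧
      restrM pred Uᶜ N ⊆ restrM pred Uᶜ M) ∧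
    (M ⊂ N ↔ M ⊆ N ∧ (restrM pred U M ⊂ restrM pred U N ∨
      restrM pred Uᶜ M ⊂ restrM pred Uᶜ N)) :=
  ⟨hM.eq_iff, hM.ssubset_iff⟩
end

section
/- Let S = (S_α) be a saturation sequence and (X_α) be a family of nonempty sets of interpretations such that for every α, X_α is saturated relative to S_α, and let M = ⋂_α X_α. Then M is nonempty and for every α, X_α = σ_{S_α}(M). -/
open Set

variable {A P : Type*}

/-!
Since the `S α` are pairwise disjoint, an interpretation can be assembled piecewise: gluing the
`S α`-parts of arbitrary `I α ∈ X α` yields an interpretation whose `S α`-restriction is that of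
`I α`, so by saturation it lies in every `X α`. Gluing with one piece replaced by an arbitrary
`J ∈ X α` puts `J` in `σ_{S α}(M)`; conversely `σ_{S α}(M) ⊆ σ_{S α}(X α) = X α` by saturation.
-/

section Gluing

variable {ι : Type*} (pred : A → P) (S : ι → Set P)

def glue (I : ι → Set A) : Set A :=
  {p | ∃ α, pred p ∈ S α ∧ p ∈ I α}

theorem restr_glue (hdisj : Pairwise (Function.onFun Disjoint S)) (I : ι → Set A) (α : ι) :
    restr pred (S α) (glue pred S I) = restr pred (S α) (I α) := by
  ext p
  constructor
  · rintro ⟨⟨β, hβ, hp⟩, hα⟩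
    obtain rfl : β = α := hdisj.eq (Set.not_disjoint_iff.2 ⟨_, hβ, hα⟩)
    exact ⟨hp, hα⟩
  · rintro ⟨hp, hα⟩
    exact ⟨⟨α, hα, hp⟩, hα⟩

theorem glue_mem_iInter (hdisj : Pairwise (Function.onFun Disjoint S)) {X : ι → Set (Set A)}
    (hsat : ∀ α, saturated pred (S α) (X α)) {I : ι → Set A} (hI : ∀ α, I α ∈ X α) :
    glue pred S I ∈ ⋂ α, X α :=
  mem_iInter.2 fun α =>
    hsat α _ (by rw [restr_glue pred S hdisj]; exact mem_image_of_mem _ (hI α))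

end Gluing

theorem sigmaSet_mono (pred : A → P) (U : Set P) {M N : Set (Set A)} (h : M ⊆ N) :
    sigmaSet pred U M ⊆ sigmaSet pred U N :=
  fun _ hI => image_mono h hI

theorem sigmaSet_eq_of_saturated {pred : A → P} {U : Set P} {M : Set (Set A)}
    (hM : saturated pred U M) : sigmaSet pred U M = M :=
  Subset.antisymm hM fun _ => mem_image_of_mem _

theorem stmt_14_general {ι : Type*} (pred : A → P) (S : ι → Set P)
    (hdisj : Pairwise (Function.onFun Disjoint S))
    (X : ι → Set (Set A)) (hne : ∀ α, (X α).Nonempty)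
    (hsat : ∀ α, saturated pred (S α) (X α)) :
    (⋂ α, X α).Nonempty ∧ ∀ α, X α = sigmaSet pred (S α) (⋂ β, X β) := by
  classical
  choose I hI using hne
  refine ⟨⟨_, glue_mem_iInter pred S hdisj hsat hI⟩, fun α => Subset.antisymm (fun J hJ => ?_) ?_⟩
  · have hupdate : ∀ β, Function.update I α J β ∈ X β :=
      Function.forall_update_iff I (p := fun β K => K ∈ X β) |>.2 ⟨hJ, fun β _ => hI β⟩
    exact ⟨_, glue_mem_iInter pred S hdisj hsat hupdate,
      by rw [restr_glue pred S hdisj, Function.update_self]⟩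
  · calc sigmaSet pred (S α) (⋂ β, X β) ⊆ sigmaSet pred (S α) (X α) :=
          sigmaSet_mono pred _ (iInter_subset X α)
      _ = X α := sigmaSet_eq_of_saturated (hsat α)

theorem stmt_14 {ι : Type*} (pred : A → P) (S : ι → Set P)
    (hdisj : Pairwise (Function.onFun Disjoint S)) (hcov : ⋃ α, S α = Set.univ)
    (X : ι → Set (Set A)) (hne : ∀ α, (X α).Nonempty)
    (hsat : ∀ α, saturated pred (S α) (X α)) :
    (⋂ α, X α).Nonempty ∧ ∀ α, X α = sigmaSet pred (S α) (⋂ β, X β) :=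
  stmt_14_general pred S hdisj X hne hsat
end

section
/- Let U be a set of predicate symbols and M, N be sets of interpretations that are both saturated relative to U. Then M ⊕ N is also saturated relative to U. -/
open Set

variable {A P : Type*}

/-! Let `K ∈ I₀ ⊕ N` with `I₀ ∈ M` and `I|U = K|U`. Closeness is compared predicate by predicate,
so `I` is minimal in `N` over `I₁ = I₀|U ∪ I|Uᶜ ∈ M`: a closer competitor `J` of `I` over `I₁` must
agree with `I` outside `U`, where `I` is at distance zero from `I₁`, and then `J|U ∪ K|Uᶜ ∈ N` would be
a closer competitor of `K` over `I₀`. -/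

section Splice

variable (pred : A → P)

lemma restr_restr_of_subset {U V : Set P} (hVU : V ⊆ U) (I : Set A) :
    restr pred V (restr pred U I) = restr pred V I := by
  ext p
  simp only [restr, mem_ofPred_eq]
  exact ⟨fun h ↦ ⟨h.1.1, h.2⟩, fun h ↦ ⟨⟨h.1, hVU h.2⟩, h.2⟩⟩

lemma restr_eq_restr_of_subset {U V : Set P} (hVU : V ⊆ U) {I J : Set A}
    (hIJ : restr pred U I = restr pred U J) : restr pred V I = restr pred V J := by
  rw [← restr_restr_of_subset pred hVU I, hIJ, restr_restr_of_subset pred hVU]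

lemma diffP_eq_symmDiff_restr (Q : P) (I J : Set A) :
    diffP pred Q I J = symmDiff (restr pred {Q} I) (restr pred {Q} J) := by
  ext p
  simp only [diffP, restr, mem_ofPred_eq, mem_singleton_iff, mem_symmDiff]
  tauto

lemma diffP_congr {U : Set P} {Q : P} (hQ : Q ∈ U) {I I' J J' : Set A}
    (hI : restr pred U I = restr pred U I') (hJ : restr pred U J = restr pred U J') :
    diffP pred Q I J = diffP pred Q I' J' := by
  have hQU : {Q} ⊆ U := singleton_subset_iff.2 hQ
  rw [diffP_eq_symmDiff_restr, diffP_eq_symmDiff_restr, restr_eq_restr_of_subset pred hQU hI,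
    restr_eq_restr_of_subset pred hQU hJ]

lemma diffP_self (Q : P) (I : Set A) : diffP pred Q I I = ∅ := by
  simp [diffP]

def splice (U : Set P) (X Y : Set A) : Set A :=
  restr pred U X ∪ restr pred Uᶜ Y

lemma restr_splice_left (U : Set P) (X Y : Set A) :
    restr pred U (splice pred U X Y) = restr pred U X := by
  ext p
  simp only [splice, restr, mem_union, mem_ofPred_eq, mem_compl_iff]
  tauto

lemma restr_splice_right (U : Set P) (X Y : Set A) :
    restr pred Uᶜ (splice pred U X Y) = restr pred Uᶜ Y := by
  ext p
  simp only [splice, restr, mem_union, mem_ofPred_eq, mem_compl_iff]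
  tauto

lemma splice_mem_of_saturated {U : Set P} {M : Set (Set A)} (hM : saturated pred U M)
    {X : Set A} (hX : X ∈ M) (Y : Set A) : splice pred U X Y ∈ M :=
  hM _ ⟨X, hX, (restr_splice_left pred U X Y).symm⟩

end Splice

section Closer

variable {pred : A → P} {U : Set P} {I J K I' J' K' : Set A}

lemma closerLE_congr
    (hU : ∀ Q ∈ U, diffP pred Q I J = diffP pred Q I' J' ∧ diffP pred Q I K = diffP pred Q I' K')
    (hUc : ∀ Q ∉ U, diffP pred Q I J = diffP pred Q I K ∧ diffP pred Q I' J' = diffP pred Q I' K') :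
    closerLE pred I J K ↔ closerLE pred I' J' K' := by
  refine forall_congr' fun Q ↦ ?_
  by_cases hQ : Q ∈ U
  · rw [(hU Q hQ).1, (hU Q hQ).2]
  · rw [(hUc Q hQ).1, (hUc Q hQ).2]
    simp only [subset_refl]

lemma closerLT_congr
    (hU : ∀ Q ∈ U, diffP pred Q I J = diffP pred Q I' J' ∧ diffP pred Q I K = diffP pred Q I' K')
    (hUc : ∀ Q ∉ U, diffP pred Q I J = diffP pred Q I K ∧ diffP pred Q I' J' = diffP pred Q I' K') :
    closerLT pred I J K ↔ closerLT pred I' J' K' :=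
  and_congr (closerLE_congr hU hUc) <| not_congr <|
    closerLE_congr (fun Q hQ ↦ (hU Q hQ).symm) fun Q hQ ↦ ⟨(hUc Q hQ).1.symm, (hUc Q hQ).2.symm⟩

end Closer

theorem stmt_17 (pred : A → P) (U : Set P) (M N : Set (Set A))
    (hM : saturated pred U M) (hN : saturated pred U N) :
    saturated pred U (oplus pred M N) := by
  rintro I ⟨K, hK, hKI⟩
  obtain ⟨I₀, hI₀, hKN, hKmin⟩ : ∃ I₀ ∈ M, K ∈ oplusI pred I₀ N := by simpa [oplus] using hK
  set I₁ := splice pred U I₀ I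
  refine mem_biUnion (splice_mem_of_saturated pred hM hI₀ I) ⟨hN I ⟨K, hKN, hKI⟩, ?_⟩
  rintro ⟨J, hJ, hJI⟩
  refine hKmin ⟨splice pred U J K, splice_mem_of_saturated pred hN hJ K, ?_⟩
  have hI₁I : ∀ Q ∉ U, diffP pred Q I₁ I = ∅ := fun Q hQ ↦ by
    rw [diffP_congr pred (mem_compl hQ) (restr_splice_right pred U I₀ I) rfl, diffP_self]
  refine (closerLT_congr (U := U) (fun Q hQ ↦ ⟨?_, ?_⟩) (fun Q hQ ↦ ⟨?_, ?_⟩)).1 hJI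
  · exact diffP_congr pred hQ (restr_splice_left pred U I₀ I)
      (restr_splice_left pred U J K).symm
  · exact diffP_congr pred hQ (restr_splice_left pred U I₀ I) hKI.symm
  · rw [hI₁I Q hQ, ← subset_empty_iff, ← hI₁I Q hQ]
    exact hJI.1 Q
  · exact diffP_congr pred (mem_compl hQ) rfl (restr_splice_right pred U J K)
end
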